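/- Let the CII estimate be Î_K = Σ_{ℓ=0}^{n−k} C(n−k,ℓ)·λ_{k,ℓ}·Σ_{W⊆K} (−1)^{k−|W|}·Î_{K,ℓ}^W, where for every W ⊆ K and ℓ ∈ L^{|W|} the stratum estimate Î_{K,ℓ}^W follows the stratum sampling model with count M_{W,ℓ} ≥ 1, the sample sequences of distinct estimated strata being mutually independent and independent of the vector of all counts (M_{W,ℓ}), and Î_{K,ℓ}^W = I_{K,ℓ}^W for ℓ ∉ L^{|W|}. Then the conditional variance of Î_K given the count vector satisfies Var[Î_K | (M_{W,ℓ})] = Σ_{W⊆K} Σ_{ℓ∈L^{|W|}} C(n−k,ℓ)²·λ_{k,ℓ}²·σ²_{K,ℓ,W}/M_{W,ℓ}. -/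

import Mathlib

open MeasureTheory ProbabilityTheory Finset
open scoped ENNReal

/-- Finsets carry the discrete σ-algebra. -/
instance finsetMeasurableSpace (n : ℕ) : MeasurableSpace (Finset (Fin n)) := ⊤

/-- The stratum `{S ⊆ N∖K : |S| = ℓ}`. -/
def strata (n : ℕ) (K : Finset (Fin n)) (ℓ : ℕ) : Finset (Finset (Fin n)) :=
  Kᶜ.powerset.filter (fun S => S.card = ℓ)

/-- The stratum value `I_{K,ℓ}^W = (1/C(n−k,ℓ))·Σ_{S ⊆ N∖K, |S|=ℓ} ν(S ∪ W)`. -/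
noncomputable def stratVal (n : ℕ) (ν : Finset (Fin n) → ℝ)
    (K W : Finset (Fin n)) (ℓ : ℕ) : ℝ :=
  (((n - K.card).choose ℓ : ℝ))⁻¹ * ∑ S ∈ strata n K ℓ, ν (S ∪ W)

/-- The stratum variance `σ²_{K,ℓ,W}`: the variance of `ν(S ∪ W)` for `S` uniformly
distributed on `{S ⊆ N∖K : |S| = ℓ}`. -/
noncomputable def stratVar (n : ℕ) (ν : Finset (Fin n) → ℝ)
    (K W : Finset (Fin n)) (ℓ : ℕ) : ℝ :=
  (((n - K.card).choose ℓ : ℝ))⁻¹ *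
    ∑ S ∈ strata n K ℓ, (ν (S ∪ W) - stratVal n ν K W ℓ) ^ 2

/-- The cardinal interaction index `I_K`. -/
noncomputable def CII (n : ℕ) (ν : Finset (Fin n) → ℝ) (lam : ℕ → ℝ)
    (K : Finset (Fin n)) : ℝ :=
  ∑ S ∈ Kᶜ.powerset, lam S.card *
    ∑ W ∈ K.powerset, (-1 : ℝ) ^ (K.card - W.card) * ν (S ∪ W)

/-- The constants `γ_2 = 2(n−1)²` and `γ_k = n^{k−1}·(n−k+1)²` for `k ≥ 3`. -/
noncomputable def gam (n k : ℕ) : ℝ :=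
  if k = 2 then 2 * ((n : ℝ) - 1) ^ 2
  else (n : ℝ) ^ (k - 1) * ((n : ℝ) - k + 1) ^ 2

/-- The stratum estimate: sample mean for estimated strata, exact value otherwise. -/
noncomputable def IhatStrat {Ω : Type*} (n : ℕ) (ν : Finset (Fin n) → ℝ)
    (K : Finset (Fin n)) (L : ℕ → Finset ℕ)
    (S : Finset (Fin n) → ℕ → ℕ → Ω → Finset (Fin n))
    (M : Finset (Fin n) → ℕ → Ω → ℕ) (W : Finset (Fin n)) (ℓ : ℕ) (ω : Ω) : ℝ :=
  if ℓ ∈ L W.card then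
    ((M W ℓ ω : ℝ))⁻¹ * ∑ m ∈ Finset.range (M W ℓ ω), ν (S W ℓ m ω ∪ W)
  else stratVal n ν K W ℓ

/-- The CII estimate `Î_K`. -/
noncomputable def IhatCII {Ω : Type*} (n : ℕ) (ν : Finset (Fin n) → ℝ)
    (K : Finset (Fin n)) (lam : ℕ → ℝ) (L : ℕ → Finset ℕ)
    (S : Finset (Fin n) → ℕ → ℕ → Ω → Finset (Fin n))
    (M : Finset (Fin n) → ℕ → Ω → ℕ) (ω : Ω) : ℝ :=
  ∑ ℓ ∈ Finset.range (n - K.card + 1), ((n - K.card).choose ℓ : ℝ) * lam ℓ *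
    ∑ W ∈ K.powerset, (-1 : ℝ) ^ (K.card - W.card) * IhatStrat n ν K L S M W ℓ ω

/-- The index set of estimated strata: pairs `(W, ℓ)` with `W ⊆ K` and `ℓ ∈ L^{|W|}`. -/
def EstIdx (n : ℕ) (K : Finset (Fin n)) (L : ℕ → Finset ℕ) : Type :=
  {p : Finset (Fin n) × ℕ // p.1 ⊆ K ∧ p.2 ∈ L p.1.card}

/-- The σ-algebra generated by the vector of all counts `(M_{W,ℓ})`. -/
def countSigma {Ω : Type*} (n : ℕ) (K : Finset (Fin n)) (L : ℕ → Finset ℕ)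
    (M : Finset (Fin n) → ℕ → Ω → ℕ) : MeasurableSpace Ω :=
  MeasurableSpace.comap (fun ω => fun q : EstIdx n K L => M q.1.1 q.1.2 ω) inferInstance

/-!
Write the estimate as `f (Y, Z)`, where `Y` is the vector of counts and `Z` the vector of sample
sequences. As `Z` is independent of `Y`, conditioning on `Y` freezes the counts: the conditional
variance is the variance of the estimate computed with deterministic counts `Y ω`. With
deterministic counts the estimate is a constant plus a linear combination of the sample means of
the estimated strata; these are independent, and the mean of `N` i.i.d. samples uniform on a
stratum has variance `σ² / N`.
-/

section Freezing

variable {Ω β γ : Type*} {mΩ : MeasurableSpace Ω} {μ : Measure Ω}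
  {mβ : MeasurableSpace β} {mγ : MeasurableSpace γ} {Y : Ω → β} {Z : Ω → γ} {f : β × γ → ℝ}

lemma stronglyMeasurable_integral_comp_prodMk [SFinite μ] (hf : StronglyMeasurable f)
    (hZ : Measurable Z) :
    StronglyMeasurable fun y => ∫ ω, f (y, Z ω) ∂μ := by
  have h : (fun y => ∫ ω, f (y, Z ω) ∂μ) = fun y => ∫ z, f (y, z) ∂μ.map Z := by
    ext y
    exact (integral_map hZ.aemeasurable
      (hf.comp_measurable measurable_prodMk_left).aestronglyMeasurable).symm
  exact h ▸ hf.integral_prod_right'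

theorem condExp_comp_prodMk_ae_eq_integral [IsProbabilityMeasure μ] (hY : Measurable Y)
    (hZ : Measurable Z) (hYZ : Y ⟂ᵢ[μ] Z) (hf : StronglyMeasurable f)
    (hfi : Integrable (fun ω => f (Y ω, Z ω)) μ) :
    μ[fun ω => f (Y ω, Z ω) | mβ.comap Y] =ᵐ[μ] fun ω => ∫ ω', f (Y ω, Z ω') ∂μ := by
  have hYZm : Measurable fun ω => (Y ω, Z ω) := hY.prodMk hZ
  have hlaw : μ.map (fun ω => (Y ω, Z ω)) = (μ.map Y).prod (μ.map Z) :=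
    (indepFun_iff_map_prod_eq_prod_map_map hY.aemeasurable hZ.aemeasurable).1 hYZ
  have hfint : Integrable f ((μ.map Y).prod (μ.map Z)) :=
    hlaw ▸ (integrable_map_measure hf.aestronglyMeasurable hYZm.aemeasurable).2 hfi
  have hφ : ∀ y, ∫ ω', f (y, Z ω') ∂μ = ∫ z, f (y, z) ∂μ.map Z := fun y =>
    (integral_map (f := fun z => f (y, z)) hZ.aemeasurable
      (hf.comp_measurable measurable_prodMk_left).aestronglyMeasurable).symm
  have hφm := stronglyMeasurable_integral_comp_prodMk (μ := μ) hf hZ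
  simp_rw [hφ] at hφm
  simp_rw [hφ]
  refine (ae_eq_condExp_of_forall_setIntegral_eq hY.comap_le hfi (fun s _ _ => ?_) ?_
    (hφm.comp_measurable (comap_measurable Y)).aestronglyMeasurable).symm
  · exact (hfint.integral_prod_left.comp_measurable hY).integrableOn
  rintro s ⟨t, ht, rfl⟩ -
  calc ∫ ω in Y ⁻¹' t, ∫ z, f (Y ω, z) ∂μ.map Z ∂μ
      = ∫ y in t, ∫ z, f (y, z) ∂μ.map Z ∂μ.map Y :=
        (setIntegral_map ht hφm.aestronglyMeasurable hY.aemeasurable).symm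
    _ = ∫ p in t ×ˢ Set.univ, f p ∂μ.map (fun ω => (Y ω, Z ω)) := by
        rw [hlaw, setIntegral_prod _ hfint.integrableOn, Measure.restrict_univ]
    _ = ∫ ω in Y ⁻¹' t, f (Y ω, Z ω) ∂μ := by
        rw [setIntegral_map (ht.prod .univ) hf.aestronglyMeasurable hYZm.aemeasurable]
        simp [Set.mk_preimage_prod]

theorem condVar_comp_prodMk_ae_eq_variance [IsProbabilityMeasure μ] (hY : Measurable Y)
    (hZ : Measurable Z) (hYZ : Y ⟂ᵢ[μ] Z) (hf : StronglyMeasurable f)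
    (hf2 : MemLp (fun ω => f (Y ω, Z ω)) 2 μ) :
    Var[fun ω => f (Y ω, Z ω); μ | mβ.comap Y] =ᵐ[μ] fun ω => Var[fun ω' => f (Y ω, Z ω'); μ] := by
  set φ : β → ℝ := fun y => ∫ ω', f (y, Z ω') ∂μ
  have hcond := condExp_comp_prodMk_ae_eq_integral hY hZ hYZ hf (hf2.integrable one_le_two)
  have hdev : (fun ω => f (Y ω, Z ω)) - μ[fun ω => f (Y ω, Z ω) | mβ.comap Y]
      =ᵐ[μ] fun ω => f (Y ω, Z ω) - φ (Y ω) := by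
    filter_upwards [hcond] with ω hω
    simp [hω, φ]
  have hg : StronglyMeasurable fun p : β × γ => (f p - φ p.1) ^ 2 :=
    (hf.sub ((stronglyMeasurable_integral_comp_prodMk hf hZ).comp_measurable
      measurable_fst)).pow 2
  have hgi : Integrable (fun ω => (f (Y ω, Z ω) - φ (Y ω)) ^ 2) μ :=
    ((hf2.sub (hf2.condExp (m := mβ.comap Y) one_le_two)).integrable_sq).congr
      (hdev.fun_comp (· ^ 2))
  refine (condExp_congr_ae (hdev.fun_comp (· ^ 2))).trans
    ((condExp_comp_prodMk_ae_eq_integral hY hZ hYZ hg hgi).trans (ae_of_all _ fun ω => ?_))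
  have hfZ : Measurable fun ω' => f (Y ω, Z ω') :=
    (hf.measurable.comp measurable_prodMk_left).comp hZ
  rw [variance_eq_integral hfZ.aemeasurable]

end Freezing

lemma abs_inv_card_mul_sum_le {ι : Type*} {s : Finset ι} {a : ι → ℝ} {B : ℝ} (hB : 0 ≤ B)
    (ha : ∀ i ∈ s, |a i| ≤ B) : |(#s : ℝ)⁻¹ * ∑ i ∈ s, a i| ≤ B := by
  rcases s.eq_empty_or_nonempty with rfl | hs
  · simpa using hB
  rw [abs_mul, abs_inv, Nat.abs_cast, inv_mul_le_iff₀ (by positivity)]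
  calc |∑ i ∈ s, a i| ≤ ∑ i ∈ s, |a i| := abs_sum_le_sum_abs _ _
    _ ≤ #s * B := by simpa using sum_le_sum ha

section Sampling

variable {Ω ι α : Type*} {mΩ : MeasurableSpace Ω} {μ : Measure Ω}

theorem variance_inv_card_mul_sum {X : ι → Ω → ℝ} {s : Finset ι} {v : ℝ}
    (hX : ∀ i ∈ s, MemLp (X i) 2 μ) (hind : (s : Set ι).Pairwise fun i j => X i ⟂ᵢ[μ] X j)
    (hvar : ∀ i ∈ s, Var[X i; μ] = v) :
    Var[fun ω => (#s : ℝ)⁻¹ * ∑ i ∈ s, X i ω; μ] = v / #s := by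
  have hsum : (fun ω => ∑ i ∈ s, X i ω) = ∑ i ∈ s, X i := by
    ext ω
    simp
  rw [variance_const_mul, hsum, IndepFun.variance_sum hX hind, sum_congr rfl hvar, sum_const,
    nsmul_eq_mul]
  rcases s.eq_empty_or_nonempty with rfl | hs
  · simp
  have : (#s : ℝ) ≠ 0 := by positivity
  field_simp

variable [IsFiniteMeasure μ] [Fintype α] [DecidableEq α] [MeasurableSpace α]
  [MeasurableSingletonClass α] {X : Ω → α} {s : Finset α}

theorem integral_comp_of_uniform (hX : Measurable X)
    (hXs : ∀ a, μ {ω | X ω = a} = if a ∈ s then (#s : ℝ≥0∞)⁻¹ else 0) (h : α → ℝ) :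
    ∫ ω, h (X ω) ∂μ = (#s : ℝ)⁻¹ * ∑ a ∈ s, h a := by
  have hlaw : ∀ a, (μ.map X).real {a} = if a ∈ s then (#s : ℝ)⁻¹ else 0 := by
    intro a
    rw [measureReal_def, Measure.map_apply hX (measurableSet_singleton a)]
    change (μ {ω | X ω = a}).toReal = _
    split_ifs with ha <;> simp [hXs, ha]
  rw [← integral_map hX.aemeasurable (measurable_of_finite h).aestronglyMeasurable,
    integral_fintype .of_finite]
  simp_rw [hlaw, ite_smul, zero_smul, sum_ite_mem, univ_inter, smul_eq_mul, mul_sum]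

theorem variance_comp_of_uniform (hX : Measurable X)
    (hXs : ∀ a, μ {ω | X ω = a} = if a ∈ s then (#s : ℝ≥0∞)⁻¹ else 0) (h : α → ℝ) :
    Var[fun ω => h (X ω); μ]
      = (#s : ℝ)⁻¹ * ∑ a ∈ s, (h a - (#s : ℝ)⁻¹ * ∑ b ∈ s, h b) ^ 2 := by
  have hhX : Measurable fun ω => h (X ω) := (measurable_of_finite h).comp hX
  rw [variance_eq_integral hhX.aemeasurable,
    integral_comp_of_uniform hX hXs h,
    integral_comp_of_uniform hX hXs fun a => (h a - (#s : ℝ)⁻¹ * ∑ b ∈ s, h b) ^ 2]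

end Sampling

section CII

variable {Ω : Type*} {n : ℕ} {ν : Finset (Fin n) → ℝ} {K W : Finset (Fin n)} {ℓ : ℕ}
  {lam : ℕ → ℝ} {L : ℕ → Finset ℕ} {S : Finset (Fin n) → ℕ → ℕ → Ω → Finset (Fin n)}
  {M : Finset (Fin n) → ℕ → Ω → ℕ}

lemma card_strata (n : ℕ) (K : Finset (Fin n)) (ℓ : ℕ) :
    #(strata n K ℓ) = (n - #K).choose ℓ := by
  have h : strata n K ℓ = Kᶜ.powersetCard ℓ := by
    ext T
    simp [strata, mem_powersetCard, and_comm]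
  rw [h, card_powersetCard, card_compl, Fintype.card_fin]

lemma abs_stratVal_le {B : ℝ} (hB : 0 ≤ B) (hν : ∀ T, |ν T| ≤ B) :
    |stratVal n ν K W ℓ| ≤ B := by
  simpa [stratVal, card_strata] using
    abs_inv_card_mul_sum_le (s := strata n K ℓ) hB fun T _ => hν (T ∪ W)

lemma IhatStrat_of_mem (h : ℓ ∈ L #W) : IhatStrat n ν K L S M W ℓ =
    fun ω => (M W ℓ ω : ℝ)⁻¹ * ∑ m ∈ range (M W ℓ ω), ν (S W ℓ m ω ∪ W) :=
  funext fun _ => if_pos h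

lemma IhatStrat_of_notMem (h : ℓ ∉ L #W) :
    IhatStrat n ν K L S M W ℓ = fun _ => stratVal n ν K W ℓ :=
  funext fun _ => if_neg h

lemma abs_IhatStrat_le {B : ℝ} (hB : 0 ≤ B) (hν : ∀ T, |ν T| ≤ B) (ω : Ω) :
    |IhatStrat n ν K L S M W ℓ ω| ≤ B := by
  unfold IhatStrat
  split_ifs
  · simpa using abs_inv_card_mul_sum_le (s := range (M W ℓ ω)) hB fun m _ => hν _
  · exact abs_stratVal_le hB hν

lemma measurable_IhatStrat [MeasurableSpace Ω] (hS : ∀ m, Measurable (S W ℓ m))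
    (hM : Measurable (M W ℓ)) : Measurable (IhatStrat n ν K L S M W ℓ) := by
  unfold IhatStrat
  split_ifs
  · have h : Measurable fun p : Ω × ℕ => (p.2 : ℝ)⁻¹ * ∑ m ∈ range p.2, ν (S W ℓ m p.1 ∪ W) :=
      measurable_from_prod_countable_left fun k => by
        dsimp only
        exact (Finset.measurable_fun_sum _ fun m _ =>
          (measurable_of_countable fun T => ν (T ∪ W)).comp (hS m)).const_mul _
    exact h.comp (measurable_id.prodMk hM)
  · exact measurable_const

lemma memLp_IhatStrat [MeasurableSpace Ω] {μ : Measure Ω} [IsFiniteMeasure μ] {p : ℝ≥0∞}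
    (hS : ∀ m, Measurable (S W ℓ m)) (hM : Measurable (M W ℓ)) :
    MemLp (IhatStrat n ν K L S M W ℓ) p μ := by
  obtain ⟨B, hB⟩ := Finite.exists_le fun T => |ν T|
  exact .of_bound (measurable_IhatStrat hS hM).aestronglyMeasurable B
    (ae_of_all _ (abs_IhatStrat_le ((abs_nonneg _).trans (hB ∅)) hB))

lemma measurable_IhatCII [MeasurableSpace Ω] (hS : ∀ W ℓ m, Measurable (S W ℓ m))
    (hM : ∀ W ℓ, Measurable (M W ℓ)) : Measurable (IhatCII n ν K lam L S M) :=
  Finset.measurable_fun_sum _ fun ℓ _ => (Finset.measurable_fun_sum _ fun W _ =>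
    (measurable_IhatStrat (hS W ℓ) (hM W ℓ)).const_mul _).const_mul _

lemma memLp_IhatCII [MeasurableSpace Ω] {μ : Measure Ω} [IsFiniteMeasure μ] {p : ℝ≥0∞}
    (hS : ∀ W ℓ m, Measurable (S W ℓ m)) (hM : ∀ W ℓ, Measurable (M W ℓ)) :
    MemLp (IhatCII n ν K lam L S M) p μ :=
  memLp_finsetSum _ fun ℓ _ => (memLp_finsetSum _ fun W _ =>
    (memLp_IhatStrat (hS W ℓ) (hM W ℓ)).const_mul _).const_mul _

lemma IhatCII_congr {Ω' : Type*} {S' : Finset (Fin n) → ℕ → ℕ → Ω' → Finset (Fin n)}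
    {M' : Finset (Fin n) → ℕ → Ω' → ℕ} {ω : Ω} {ω' : Ω'}
    (hM : ∀ W ⊆ K, ∀ ℓ ∈ L #W, M W ℓ ω = M' W ℓ ω')
    (hS : ∀ W ⊆ K, ∀ ℓ ∈ L #W, ∀ m, S W ℓ m ω = S' W ℓ m ω') :
    IhatCII n ν K lam L S M ω = IhatCII n ν K lam L S' M' ω' := by
  refine sum_congr rfl fun ℓ _ => congrArg _ <| sum_congr rfl fun W hW => ?_
  rw [mem_powerset] at hW
  unfold IhatStrat
  split_ifs with hℓ
  · simp only [hM W hW ℓ hℓ, hS W hW ℓ hℓ]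
  · rfl

variable [MeasurableSpace Ω] {μ : Measure Ω} [IsProbabilityMeasure μ] {N : Finset (Fin n) → ℕ → ℕ}

theorem variance_IhatStrat_of_const_counts (hS : ∀ m, Measurable (S W ℓ m))
    (hiid : iIndepFun (m := fun _ => finsetMeasurableSpace n) (S W ℓ) μ)
    (hunif : ∀ (m : ℕ) (T : Finset (Fin n)), μ {ω | S W ℓ m ω = T}
      = if T ∈ strata n K ℓ then (#(strata n K ℓ) : ℝ≥0∞)⁻¹ else 0)
    (hℓ : ℓ ∈ L #W) :
    Var[IhatStrat n ν K L S (fun W ℓ _ => N W ℓ) W ℓ; μ] = stratVar n ν K W ℓ / N W ℓ := by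
  have hvar : ∀ m ∈ range (N W ℓ), Var[fun ω => ν (S W ℓ m ω ∪ W); μ] = stratVar n ν K W ℓ := by
    intro m _
    rw [variance_comp_of_uniform (hS m) (hunif m) fun T => ν (T ∪ W), card_strata]
    rfl
  have hmean := variance_inv_card_mul_sum (s := range (N W ℓ))
    (X := fun m ω => ν (S W ℓ m ω ∪ W))
    (fun m _ => (MemLp.of_discrete (f := fun T => ν (T ∪ W))).comp_of_map (hS m).aemeasurable)
    (fun i _ j _ hij => (hiid.indepFun hij).comp (measurable_of_countable fun T => ν (T ∪ W))
      (measurable_of_countable fun T => ν (T ∪ W))) hvar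
  rw [card_range] at hmean
  rwa [IhatStrat_of_mem hℓ]

theorem indepFun_IhatStrat_of_const_counts {W' : Finset (Fin n)} {ℓ' : ℕ}
    (hseqIndep : iIndepFun
      (m := fun _ : EstIdx n K L => (inferInstance : MeasurableSpace (ℕ → Finset (Fin n))))
      (fun p ω => fun m => S p.1.1 p.1.2 m ω) μ)
    (hW : W ⊆ K) (hW' : W' ⊆ K) (hne : (W, ℓ) ≠ (W', ℓ')) :
    IhatStrat n ν K L S (fun W ℓ _ => N W ℓ) W ℓ ⟂ᵢ[μ]
      IhatStrat n ν K L S (fun W ℓ _ => N W ℓ) W' ℓ' := by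
  by_cases hℓ : ℓ ∈ L #W
  · by_cases hℓ' : ℓ' ∈ L #W'
    · rw [IhatStrat_of_mem hℓ, IhatStrat_of_mem hℓ']
      have hsamp : ∀ (W : Finset (Fin n)) (ℓ : ℕ), Measurable fun s : ℕ → Finset (Fin n) =>
          (N W ℓ : ℝ)⁻¹ * ∑ m ∈ range (N W ℓ), ν (s m ∪ W) := fun W ℓ =>
        (Finset.measurable_fun_sum _ fun m _ =>
          (measurable_of_countable fun T => ν (T ∪ W)).comp (measurable_pi_apply m)).const_mul _
      exact (hseqIndep.indepFun (i := ⟨(W, ℓ), hW, hℓ⟩) (j := ⟨(W', ℓ'), hW', hℓ'⟩)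
        (by simpa [EstIdx] using hne)).comp (hsamp W ℓ) (hsamp W' ℓ')
    · rw [IhatStrat_of_notMem hℓ']
      exact indepFun_const_right _ _
  · rw [IhatStrat_of_notMem hℓ]
    exact indepFun_const_left _ _

theorem variance_IhatCII_of_const_counts (hL : ∀ w, L w ⊆ range (n - #K + 1))
    (hS : ∀ W ℓ m, Measurable (S W ℓ m))
    (hiid : ∀ W, W ⊆ K → ∀ ℓ ∈ L #W, iIndepFun (m := fun _ => finsetMeasurableSpace n) (S W ℓ) μ)
    (hunif : ∀ W, W ⊆ K → ∀ ℓ ∈ L #W, ∀ (m : ℕ) (T : Finset (Fin n)), μ {ω | S W ℓ m ω = T}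
      = if T ∈ strata n K ℓ then (#(strata n K ℓ) : ℝ≥0∞)⁻¹ else 0)
    (hseqIndep : iIndepFun
      (m := fun _ : EstIdx n K L => (inferInstance : MeasurableSpace (ℕ → Finset (Fin n))))
      (fun p ω => fun m => S p.1.1 p.1.2 m ω) μ) :
    Var[IhatCII n ν K lam L S (fun W ℓ _ => N W ℓ); μ] = ∑ W ∈ K.powerset, ∑ ℓ ∈ L #W,
      ((n - #K).choose ℓ : ℝ) ^ 2 * lam ℓ ^ 2 * stratVar n ν K W ℓ / N W ℓ := by
  set I := IhatStrat n ν K L S (fun W ℓ _ => N W ℓ)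
  set c : Finset (Fin n) × ℕ → ℝ := fun p => (n - #K).choose p.2 * lam p.2 * (-1) ^ (#K - #p.1)
  set s := K.powerset ×ˢ range (n - #K + 1)
  have hsum :
      IhatCII n ν K lam L S (fun W ℓ _ => N W ℓ) = ∑ p ∈ s, fun ω => c p * I p.1 p.2 ω := by
    ext ω
    simp only [IhatCII, s, sum_product_right, Finset.sum_apply, mul_sum, c, I, mul_assoc]
  have hvar : ∀ p ∈ s, Var[fun ω => c p * I p.1 p.2 ω; μ] = if p.2 ∈ L #p.1 then
      ((n - #K).choose p.2 : ℝ) ^ 2 * lam p.2 ^ 2 * stratVar n ν K p.1 p.2 / N p.1 p.2 else 0 := by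
    rintro ⟨W, ℓ⟩ hp
    have hW : W ⊆ K := mem_powerset.1 (mem_product.1 hp).1
    rw [variance_const_mul]
    split_ifs with hℓ
    · rw [variance_IhatStrat_of_const_counts (hS W ℓ) (hiid W hW ℓ hℓ) (hunif W hW ℓ hℓ) hℓ]
      simp [c, mul_pow, ← pow_mul, pow_mul', mul_div_assoc]
    · simp [I, IhatStrat_of_notMem hℓ, variance_eq_integral measurable_const.aemeasurable]
  rw [hsum, IndepFun.variance_sum, sum_congr rfl hvar, sum_product]
  · refine sum_congr rfl fun W _ => ?_
    dsimp only
    rw [sum_ite_mem, inter_eq_right.2 (hL _)]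
  · exact fun p _ => (memLp_IhatStrat (hS p.1 p.2) measurable_const).const_mul _
  · rintro ⟨W, ℓ⟩ hp ⟨W', ℓ'⟩ hp' hne
    exact (indepFun_IhatStrat_of_const_counts hseqIndep (mem_powerset.1 (mem_product.1 hp).1)
      (mem_powerset.1 (mem_product.1 hp').1) hne).comp
        (measurable_const_mul _) (measurable_const_mul _)

end CII

def EstIdx.extend {n : ℕ} {K : Finset (Fin n)} {L : ℕ → Finset ℕ} {α : Type*}
    (x : EstIdx n K L → α) (a : α) (W : Finset (Fin n)) (ℓ : ℕ) : α :=
  if h : W ⊆ K ∧ ℓ ∈ L #W then x ⟨(W, ℓ), h⟩ else a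

lemma EstIdx.extend_of_mem {n : ℕ} {K W : Finset (Fin n)} {L : ℕ → Finset ℕ} {ℓ : ℕ} {α : Type*}
    {x : EstIdx n K L → α} {a : α} (h : W ⊆ K ∧ ℓ ∈ L #W) : extend x a W ℓ = x ⟨(W, ℓ), h⟩ :=
  dif_pos h

lemma EstIdx.measurable_extend {n : ℕ} {K : Finset (Fin n)} {L : ℕ → Finset ℕ} {α β : Type*}
    [MeasurableSpace α] [MeasurableSpace β] {x : β → EstIdx n K L → α} (hx : Measurable x) (a : α)
    (W : Finset (Fin n)) (ℓ : ℕ) : Measurable fun b => extend (x b) a W ℓ := by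
  unfold extend
  split_ifs
  · exact (measurable_pi_apply _).comp hx
  · exact measurable_const

theorem cii_estimate_conditional_variance_general {Ω : Type*} [MeasureSpace Ω]
    [IsProbabilityMeasure (ℙ : Measure Ω)]
    (n : ℕ) (ν : Finset (Fin n) → ℝ) (K : Finset (Fin n)) (lam : ℕ → ℝ)
    (L : ℕ → Finset ℕ) (hL : ∀ w, L w ⊆ Finset.range (n - K.card + 1))
    (S : Finset (Fin n) → ℕ → ℕ → Ω → Finset (Fin n))
    (M : Finset (Fin n) → ℕ → Ω → ℕ)
    (hSmeas : ∀ W ℓ m, Measurable (S W ℓ m)) (hMmeas : ∀ W ℓ, Measurable (M W ℓ))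
    -- within each estimated stratum the samples are i.i.d. uniform on the stratum
    (hiid : ∀ W, W ⊆ K → ∀ ℓ ∈ L W.card,
      iIndepFun (m := fun _ => finsetMeasurableSpace n) (S W ℓ) ℙ)
    (hunif : ∀ W, W ⊆ K → ∀ ℓ ∈ L W.card, ∀ (m : ℕ) (T : Finset (Fin n)),
      ℙ {ω | S W ℓ m ω = T}
        = if T ∈ strata n K ℓ then ((strata n K ℓ).card : ℝ≥0∞)⁻¹ else 0)
    -- the sample sequences of distinct estimated strata are mutually independent
    (hseqIndep : iIndepFun
      (m := fun _ : EstIdx n K L => (inferInstance : MeasurableSpace (ℕ → Finset (Fin n))))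
      (fun p ω => fun m => S p.1.1 p.1.2 m ω) ℙ)
    -- and independent of the vector of all counts
    (hcountIndep : IndepFun
      (fun ω => fun q : EstIdx n K L => M q.1.1 q.1.2 ω)
      (fun ω => fun (q : EstIdx n K L) (m : ℕ) => S q.1.1 q.1.2 m ω) ℙ) :
    ℙ[fun ω => (IhatCII n ν K lam L S M ω
        - (ℙ[IhatCII n ν K lam L S M | countSigma n K L M]) ω) ^ 2
      | countSigma n K L M]
      =ᵐ[ℙ] fun ω => ∑ W ∈ K.powerset, ∑ ℓ ∈ L W.card,
          ((n - K.card).choose ℓ : ℝ) ^ 2 * lam ℓ ^ 2 * stratVar n ν K W ℓ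
            / (M W ℓ ω : ℝ) := by
  set Y : Ω → EstIdx n K L → ℕ := fun ω q => M q.1.1 q.1.2 ω
  set Z : Ω → EstIdx n K L → ℕ → Finset (Fin n) := fun ω q m => S q.1.1 q.1.2 m ω
  have hY : Measurable Y := measurable_pi_lambda _ fun q => hMmeas _ _
  have hZ : Measurable Z :=
    measurable_pi_lambda _ fun q => measurable_pi_lambda _ fun m => hSmeas _ _ _
  set f : (EstIdx n K L → ℕ) × (EstIdx n K L → ℕ → Finset (Fin n)) → ℝ :=
    IhatCII n ν K lam L (fun W ℓ m p => EstIdx.extend (fun q => p.2 q m) ∅ W ℓ)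
      (fun W ℓ p => EstIdx.extend p.1 0 W ℓ)
  have hf : Measurable f := measurable_IhatCII
    (fun W ℓ m => EstIdx.measurable_extend (by fun_prop) _ W ℓ)
    (fun W ℓ => EstIdx.measurable_extend measurable_fst _ W ℓ)
  have hfYZ : ∀ ω ω', f (Y ω, Z ω') = IhatCII n ν K lam L S (fun W ℓ _ => M W ℓ ω) ω' :=
    fun ω ω' => IhatCII_congr (fun W hW ℓ hℓ => EstIdx.extend_of_mem ⟨hW, hℓ⟩)
      (fun W hW ℓ hℓ m => EstIdx.extend_of_mem ⟨hW, hℓ⟩)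
  have hIhat : IhatCII n ν K lam L S M = fun ω => f (Y ω, Z ω) := funext fun ω => (hfYZ ω ω).symm
  rw [hIhat]
  filter_upwards [condVar_comp_prodMk_ae_eq_variance hY hZ hcountIndep hf.stronglyMeasurable
    (hIhat ▸ memLp_IhatCII hSmeas hMmeas)] with ω hω
  refine hω.trans ?_
  simp_rw [hfYZ]
  exact variance_IhatCII_of_const_counts hL hSmeas hiid hunif hseqIndep

/-- **Conditional variance of the CII estimate given the count vector (Lemma A.4).**
`Var[Î_K | (M_{W,ℓ})] = Σ_{W⊆K} Σ_{ℓ∈L^{|W|}} C(n−k,ℓ)²·λ_{k,ℓ}²·σ²_{K,ℓ,W}/M_{W,ℓ}`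
almost surely. -/
theorem cii_estimate_conditional_variance {Ω : Type*} [MeasureSpace Ω]
    [IsProbabilityMeasure (ℙ : Measure Ω)]
    (n : ℕ) (ν : Finset (Fin n) → ℝ) (K : Finset (Fin n)) (lam : ℕ → ℝ)
    (L : ℕ → Finset ℕ) (hL : ∀ w, L w ⊆ Finset.range (n - K.card + 1))
    (S : Finset (Fin n) → ℕ → ℕ → Ω → Finset (Fin n))
    (M : Finset (Fin n) → ℕ → Ω → ℕ)
    (hSmeas : ∀ W ℓ m, Measurable (S W ℓ m)) (hMmeas : ∀ W ℓ, Measurable (M W ℓ))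
    -- within each estimated stratum the samples are i.i.d. uniform on the stratum
    (hiid : ∀ W, W ⊆ K → ∀ ℓ ∈ L W.card,
      iIndepFun (m := fun _ => finsetMeasurableSpace n) (S W ℓ) ℙ)
    (hunif : ∀ W, W ⊆ K → ∀ ℓ ∈ L W.card, ∀ (m : ℕ) (T : Finset (Fin n)),
      ℙ {ω | S W ℓ m ω = T}
        = if T ∈ strata n K ℓ then ((strata n K ℓ).card : ℝ≥0∞)⁻¹ else 0)
    -- each count is a.s. positive
    (hMpos : ∀ W, W ⊆ K → ∀ ℓ ∈ L W.card, ∀ᵐ ω ∂ℙ, 1 ≤ M W ℓ ω)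
    -- the sample sequences of distinct estimated strata are mutually independent
    (hseqIndep : iIndepFun
      (m := fun _ : EstIdx n K L => (inferInstance : MeasurableSpace (ℕ → Finset (Fin n))))
      (fun p ω => fun m => S p.1.1 p.1.2 m ω) ℙ)
    -- and independent of the vector of all counts
    (hcountIndep : IndepFun
      (fun ω => fun q : EstIdx n K L => M q.1.1 q.1.2 ω)
      (fun ω => fun (q : EstIdx n K L) (m : ℕ) => S q.1.1 q.1.2 m ω) ℙ) :
    ℙ[fun ω => (IhatCII n ν K lam L S M ω
        - (ℙ[IhatCII n ν K lam L S M | countSigma n K L M]) ω) ^ 2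
      | countSigma n K L M]
      =ᵐ[ℙ] fun ω => ∑ W ∈ K.powerset, ∑ ℓ ∈ L W.card,
          ((n - K.card).choose ℓ : ℝ) ^ 2 * lam ℓ ^ 2 * stratVar n ν K W ℓ
            / (M W ℓ ω : ℝ) :=
  cii_estimate_conditional_variance_general n ν K lam L hL S M hSmeas hMmeas hiid hunif hseqIndep
    hcountIndep
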